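/- arXiv:2001.04421 — 2 statements merged into one kernel-verified Lean document; each statement's English description precedes it below -/
import Mathlib

section
/- Let d ≥ 3 and let q > 0. Then inf{ G_q(Ω) : Ω ⊂ ℝ^d non-empty, open and bounded } = 0. -/
open MeasureTheory Metric Set Bornology ENNReal

/-- Torsional rigidity of an open set `Ω ⊆ ℝ^d`:
`T(Ω) = sup { (∫_Ω v)² / ∫ |∇v|² : v ∈ C_c^∞(Ω), ∫ |∇v|² > 0 }`. -/
noncomputable def torsion (d : ℕ) (Ω : Set (EuclideanSpace ℝ (Fin d))) : ℝ :=
  sSup {e : ℝ | ∃ v : EuclideanSpace ℝ (Fin d) → ℝ,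
    ContDiff ℝ (⊤ : ℕ∞) v ∧ HasCompactSupport v ∧ tsupport v ⊆ Ω ∧
    0 < ∫ x, ‖fderiv ℝ v x‖ ^ 2 ∧
    e = (∫ x in Ω, v x) ^ 2 / ∫ x, ‖fderiv ℝ v x‖ ^ 2}

/-- Newtonian capacity of a set `K ⊆ ℝ^d`:
`cap(K) = inf { ∫ |∇φ|² : φ ∈ C¹_c(ℝ^d), φ ≥ 1 on an open neighbourhood of K }`. -/
noncomputable def newtCap (d : ℕ) (K : Set (EuclideanSpace ℝ (Fin d))) : ℝ :=
  sInf {e : ℝ | ∃ φ : EuclideanSpace ℝ (Fin d) → ℝ,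
    ContDiff ℝ 1 φ ∧ HasCompactSupport φ ∧
    (∃ U : Set (EuclideanSpace ℝ (Fin d)), IsOpen U ∧ K ⊆ U ∧ ∀ x ∈ U, 1 ≤ φ x) ∧
    e = ∫ x, ‖fderiv ℝ φ x‖ ^ 2}

/-- The scaling invariant shape functional
`G_q(Ω) = cap(Ω̄) T(Ω)^q / |Ω|^{1+q+2(q-1)/d}`. -/
noncomputable def Gfun (d : ℕ) (q : ℝ) (Ω : Set (EuclideanSpace ℝ (Fin d))) : ℝ :=
  newtCap d (closure Ω) * torsion d Ω ^ q /
    (volume Ω).toReal ^ (1 + q + 2 * (q - 1) / d)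

/-- The inradius of a set `A ⊆ ℝ^d`. -/
noncomputable def inradius (d : ℕ) (A : Set (EuclideanSpace ℝ (Fin d))) : ℝ :=
  sSup {r : ℝ | 0 ≤ r ∧ ∃ x, ball x r ⊆ A}


lemma slice_bound (n : ℕ) (hn : 0 < n) (f f' H : ℝ → ℝ)
    (hd : ∀ t, HasDerivAt f (f' t) t)
    (hf' : Continuous f') (hH : Continuous H) (hH0 : ∀ t, 0 ≤ H t)
    (hb : ∀ t, |f' t| ≤ H t)
    (hsupp : ∀ t, t ∉ Set.Ioo (0:ℝ) 1 → f t = 0)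
    (hzero : ∀ k : ℕ, k ≤ n → f ((k : ℝ) / n) = 0)
    (hHi : Integrable H) :
    ∫ t, |f t| ≤ (1 / n) * ∫ t, H t := by
  have hfc : Continuous f := by
    rw [continuous_iff_continuousAt]; exact fun t => (hd t).continuousAt
  have hnR : (0:ℝ) < n := by exact_mod_cast hn
  set a : ℕ → ℝ := fun k => (k : ℝ) / n with ha
  have hmono : ∀ k : ℕ, a k ≤ a (k + 1) := by
    intro k
    simp only [ha]
    gcongr
    omega
  -- step 1 : whole-line integral equals integral over Ioc 0 1
  have hsub : (Function.support fun t => |f t|) ⊆ Set.Ioc (0:ℝ) 1 := by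
    intro t ht
    by_contra hcon
    have : f t = 0 := hsupp t (fun hmem => hcon ⟨hmem.1, hmem.2.le⟩)
    simp [Function.mem_support, this] at ht
  have h1 : ∫ t, |f t| = ∫ t in Set.Ioc (0:ℝ) 1, |f t| := by
    rw [← integral_indicator measurableSet_Ioc, Set.indicator_eq_self.mpr hsub]
  -- step 2 : interval integral
  have h2 : ∫ t in Set.Ioc (0:ℝ) 1, |f t| = ∫ t in (0:ℝ)..1, |f t| :=
    (intervalIntegral.integral_of_le zero_le_one).symm
  -- per-interval bound
  have hper : ∀ k : ℕ, k < n →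
      ∫ t in a k..a (k+1), |f t| ≤ (1/n) * ∫ t in a k..a (k+1), H t := by
    intro k hk
    have hlen : a (k+1) - a k = 1 / n := by
      simp only [ha]; push_cast; ring
    have hM : ∀ t ∈ Set.Icc (a k) (a (k+1)), |f t| ≤ ∫ s in a k..a (k+1), H s := by
      intro t ht
      have hft : f t = ∫ s in a k..t, f' s := by
        have := intervalIntegral.integral_eq_sub_of_hasDerivAt
          (f := f) (f' := f') (a := a k) (b := t) (fun s _ => hd s)
          (hf'.intervalIntegrable _ _)
        rw [this, hzero k hk.le]; ring
      calc |f t| = |∫ s in a k..t, f' s| := by rw [hft]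
        _ ≤ ∫ s in a k..t, |f' s| := intervalIntegral.abs_integral_le_integral_abs ht.1
        _ ≤ ∫ s in a k..t, H s := by
            apply intervalIntegral.integral_mono_on ht.1
              ((hf'.abs).intervalIntegrable _ _) (hH.intervalIntegrable _ _)
            exact fun s _ => hb s
        _ ≤ ∫ s in a k..a (k+1), H s := by
            apply intervalIntegral.integral_mono_interval le_rfl ht.1 ht.2
              (Filter.Eventually.of_forall hH0) (hH.intervalIntegrable _ _)
    have hnn : 0 ≤ ∫ t in a k..a (k+1), |f t| :=
      intervalIntegral.integral_nonneg (hmono k) (fun t _ => abs_nonneg _)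
    have := intervalIntegral.norm_integral_le_of_norm_le_const
      (C := ∫ s in a k..a (k+1), H s) (a := a k) (b := a (k+1)) (f := fun t => |f t|) ?_
    · rw [Real.norm_eq_abs, abs_of_nonneg hnn] at this
      calc ∫ t in a k..a (k+1), |f t| ≤ (∫ s in a k..a (k+1), H s) * |a (k+1) - a k| := this
        _ = (1/n) * ∫ s in a k..a (k+1), H s := by
            rw [hlen, abs_of_nonneg (by positivity : (0:ℝ) ≤ 1/(n:ℝ))]; ring
    · intro x hx
      rw [Set.uIoc_of_le (hmono k)] at hx
      rw [Real.norm_eq_abs, abs_abs]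
      exact hM x ⟨hx.1.le, hx.2⟩
  -- sums
  have hsum1 : ∑ k ∈ Finset.range n, ∫ t in a k..a (k+1), |f t| = ∫ t in (0:ℝ)..1, |f t| := by
    have := intervalIntegral.sum_integral_adjacent_intervals
      (f := fun t => |f t|) (a := a) (μ := volume) (n := n)
      (fun k _ => (hfc.abs).intervalIntegrable _ _)
    rw [this]
    norm_num [ha, div_self hnR.ne']
  have hsum2 : ∑ k ∈ Finset.range n, ∫ t in a k..a (k+1), H t = ∫ t in (0:ℝ)..1, H t := by
    have := intervalIntegral.sum_integral_adjacent_intervals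
      (f := H) (a := a) (μ := volume) (n := n)
      (fun k _ => hH.intervalIntegrable _ _)
    rw [this]
    norm_num [ha, div_self hnR.ne']
  have h3 : ∫ t in (0:ℝ)..1, |f t| ≤ (1/n) * ∫ t in (0:ℝ)..1, H t := by
    rw [← hsum1, ← hsum2, Finset.mul_sum]
    exact Finset.sum_le_sum (fun k hk => hper k (Finset.mem_range.mp hk))
  have h4 : ∫ t in (0:ℝ)..1, H t ≤ ∫ t, H t := by
    rw [intervalIntegral.integral_of_le zero_le_one]
    exact setIntegral_le_integral hHi (Filter.Eventually.of_forall hH0)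
  calc ∫ t, |f t| = ∫ t in (0:ℝ)..1, |f t| := by rw [h1, h2]
    _ ≤ (1/n) * ∫ t in (0:ℝ)..1, H t := h3
    _ ≤ (1/n) * ∫ t, H t := by
        apply mul_le_mul_of_nonneg_left h4 (by positivity)

variable (m n : ℕ)

def cubeSl : Set (EuclideanSpace ℝ (Fin (m+1))) :=
  {x | (∀ i, x i ∈ Set.Ioo (0:ℝ) 1) ∧ ∀ k : ℕ, k ≤ n → x 0 ≠ (k : ℝ) / n}

noncomputable def sigEq : (ℝ × (Fin m → ℝ)) ≃ᵐ EuclideanSpace ℝ (Fin (m+1)) :=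
  ((MeasurableEquiv.piFinSuccAbove (fun _ : Fin (m+1) => ℝ) 0).symm).trans
    (MeasurableEquiv.toLp 2 (Fin (m+1) → ℝ)).symm.symm

lemma sigEq_mp : MeasurePreserving (sigEq m) volume volume := by
  have h1 := (volume_preserving_piFinSuccAbove (fun _ : Fin (m+1) => ℝ) 0).symm
  have h2 := (EuclideanSpace.volume_preserving_symm_measurableEquiv_toLp (Fin (m+1))).symm
  exact h2.comp h1

lemma sigEq_apply (t : ℝ) (y : Fin m → ℝ) (i : Fin (m+1)) :
    sigEq m (t, y) i = Fin.insertNth (α := fun _ : Fin (m+1) => ℝ) 0 t y i := by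
  simp [sigEq, MeasurableEquiv.piFinSuccAbove_symm_apply,
    MeasurableEquiv.coe_toLp, MeasurableEquiv.coe_toLp_symm, Fin.insertNthEquiv]

lemma sigEq_zero (t : ℝ) (y : Fin m → ℝ) : sigEq m (t, y) 0 = t := by
  rw [sigEq_apply]; simp

lemma sigEq_succ (t : ℝ) (y : Fin m → ℝ) (j : Fin m) : sigEq m (t, y) j.succ = y j := by
  have := Fin.insertNth_apply_succAbove (α := fun _ : Fin (m+1) => ℝ) (i := (0 : Fin (m+1))) (j := j) (x := t) (p := y)
  rw [sigEq_apply]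
  simpa [Fin.succAbove] using this

noncomputable def cvec : EuclideanSpace ℝ (Fin (m+1)) := sigEq m (1, 0)

lemma cvec_norm : ‖cvec m‖ = 1 := by
  have h0 : cvec m 0 = 1 := sigEq_zero m 1 0
  have hs : ∀ j : Fin m, cvec m j.succ = 0 := fun j => sigEq_succ m 1 0 j
  rw [EuclideanSpace.norm_eq]
  have : ∑ i, ‖cvec m i‖ ^ 2 = 1 := by
    rw [Fin.sum_univ_succ, h0]
    simp [hs]
  rw [this, Real.sqrt_one]

lemma sigEq_line (t : ℝ) (y : Fin m → ℝ) :
    sigEq m (t, y) = sigEq m (0, y) + t • cvec m := by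
  apply PiLp.ext
  intro i
  have hadd : (sigEq m (0, y) + t • cvec m) i = sigEq m (0, y) i + t * cvec m i := rfl
  rw [hadd]
  induction i using Fin.cases with
  | zero =>
      rw [sigEq_zero m t y, show (sigEq m (0, y)) 0 = (0:ℝ) from sigEq_zero m 0 y,
        show cvec m 0 = 1 from sigEq_zero m 1 0]
      ring
  | succ j =>
      rw [sigEq_succ m t y j, show (sigEq m (0, y)) j.succ = y j from sigEq_succ m 0 y j,
        show cvec m j.succ = 0 from sigEq_succ m 1 0 j]
      ring

lemma key_bound (hn : 0 < n) (v : EuclideanSpace ℝ (Fin (m+1)) → ℝ)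
    (hv : ContDiff ℝ (⊤ : ℕ∞) v) (hcs : HasCompactSupport v)
    (hsupp : tsupport v ⊆ cubeSl m n) :
    ∫ x, |v x| ≤ (1 / n) * ∫ x, ‖fderiv ℝ v x‖ := by
  classical
  set σ := sigEq m with hσ
  have mp := sigEq_mp m
  set c := cvec m with hc
  set g : EuclideanSpace ℝ (Fin (m+1)) → ℝ := fun x => ‖fderiv ℝ v x‖ with hg
  -- basic integrability on E
  have hvcont : Continuous v := hv.continuous
  have hvi : Integrable (fun x => |v x|) := (hvcont.abs).integrable_of_hasCompactSupport hcs.abs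
  have hgcont : Continuous g := (hv.continuous_fderiv (by simp)).norm
  have hgcs : HasCompactSupport g := (hcs.fderiv ℝ).norm
  have hgi : Integrable g := hgcont.integrable_of_hasCompactSupport hgcs
  -- transfer to the product space
  have hVi : Integrable (fun z : ℝ × (Fin m → ℝ) => |v (σ z)|) volume :=
    (mp.integrable_comp_emb σ.measurableEmbedding).mpr hvi
  have hGi : Integrable (fun z : ℝ × (Fin m → ℝ) => g (σ z)) volume :=
    (mp.integrable_comp_emb σ.measurableEmbedding).mpr hgi
  have e1 : ∫ x, |v x| = ∫ z : ℝ × (Fin m → ℝ), |v (σ z)| :=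
    (mp.integral_comp σ.measurableEmbedding _).symm
  have e2 : ∫ x, g x = ∫ z : ℝ × (Fin m → ℝ), g (σ z) :=
    (mp.integral_comp σ.measurableEmbedding _).symm
  rw [e1, e2]
  rw [Measure.volume_eq_prod] at hVi hGi ⊢
  rw [integral_prod_symm _ hVi, integral_prod_symm _ hGi]
  -- pointwise (in y) slice estimate
  have hslice : ∀ y : Fin m → ℝ,
      ∫ t, |v (σ (t, y))| ≤ (1 / n) * ∫ t, g (σ (t, y)) := by
    intro y
    set a := σ (0, y) with haa
    have hline : ∀ t : ℝ, σ (t, y) = a + t • c := fun t => sigEq_line m t y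
    have hdiff : ∀ t : ℝ, HasDerivAt (fun s : ℝ => a + s • c) c t := by
      intro t
      have h1 : HasDerivAt (fun s : ℝ => s • c) ((1:ℝ) • c) t := (hasDerivAt_id t).smul_const c
      rw [one_smul] at h1
      exact h1.const_add a
    have hvd : ∀ t : ℝ, HasDerivAt (fun s => v (a + s • c)) ((fderiv ℝ v (a + t • c)) c) t :=
      fun t => ((hv.differentiable (by simp) (a + t • c)).hasFDerivAt).comp_hasDerivAt t (hdiff t)
    have hlc : Continuous fun t : ℝ => a + t • c := continuous_const.add (continuous_id.smul continuous_const)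
    have hf'c : Continuous fun t : ℝ => (fderiv ℝ v (a + t • c)) c :=
      ((hv.continuous_fderiv (by simp)).comp hlc).clm_apply continuous_const
    have hHc : Continuous fun t : ℝ => g (a + t • c) := hgcont.comp hlc
    -- H integrable : compact support
    have hHcs : HasCompactSupport fun t : ℝ => g (a + t • c) := by
      obtain ⟨ρ, hρ⟩ := hgcs.isBounded.subset_closedBall 0
      apply HasCompactSupport.intro (isCompact_Icc (a := -(ρ + ‖a‖)) (b := ρ + ‖a‖))
      intro t ht
      by_contra hne
      have hmem : a + t • c ∈ tsupport g := subset_closure (Function.mem_support.mpr hne)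
      have hnorm : ‖a + t • c‖ ≤ ρ := by
        have := hρ hmem; simpa [Metric.mem_closedBall] using this
      have : |t| ≤ ρ + ‖a‖ := by
        have h1 : ‖t • c‖ ≤ ‖a + t • c‖ + ‖a‖ := by
          have := norm_sub_le (a + t • c) a; simpa using this
        have h2 : ‖t • c‖ = |t| := by
          rw [norm_smul, cvec_norm]; simp [Real.norm_eq_abs]
        linarith
      exact ht ⟨by linarith [abs_le.mp this |>.1, abs_le.mp this |>.2], (abs_le.mp this).2⟩
    have hHi : Integrable fun t : ℝ => g (a + t • c) :=
      hHc.integrable_of_hasCompactSupport hHcs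
    -- vanishing conditions
    have hvan : ∀ t : ℝ, σ (t, y) ∉ cubeSl m n → v (σ (t, y)) = 0 := by
      intro t hnot
      by_contra hne
      exact hnot (hsupp (subset_closure (Function.mem_support.mpr hne)))
    have hsupp1 : ∀ t : ℝ, t ∉ Set.Ioo (0:ℝ) 1 → v (a + t • c) = 0 := by
      intro t ht
      rw [← hline]
      apply hvan
      intro hmem
      exact ht (by simpa [hσ, sigEq_zero] using hmem.1 0)
    have hzero1 : ∀ k : ℕ, k ≤ n → v (a + ((k : ℝ) / n) • c) = 0 := by
      intro k hk
      rw [← hline]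
      apply hvan
      intro hmem
      exact (hmem.2 k hk) (sigEq_zero m _ y)
    have := slice_bound n hn (fun t => v (a + t • c))
      (fun t => (fderiv ℝ v (a + t • c)) c) (fun t => g (a + t • c))
      hvd hf'c hHc (fun t => norm_nonneg _)
      (fun t => by
        have := (fderiv ℝ v (a + t • c)).le_opNorm c
        rw [cvec_norm, mul_one] at this
        simpa [Real.norm_eq_abs] using this)
      hsupp1 hzero1 hHi
    simpa only [← hline] using this
  -- integrate the slice estimate in y
  have hFy : Integrable (fun y : Fin m → ℝ => ∫ t, |v (σ (t, y))|) volume := by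
    have := hVi.integral_norm_prod_right
    simpa [Real.norm_eq_abs, abs_abs] using this
  have hGy : Integrable (fun y : Fin m → ℝ => ∫ t, g (σ (t, y))) volume := by
    have := hGi.integral_norm_prod_right
    simpa [hg, Real.norm_eq_abs, abs_of_nonneg (norm_nonneg _)] using this
  calc ∫ y : Fin m → ℝ, ∫ t, |v (σ (t, y))|
      ≤ ∫ y : Fin m → ℝ, (1 / n) * ∫ t, g (σ (t, y)) :=
        integral_mono hFy (hGy.const_mul _) hslice
    _ = (1 / n) * ∫ y : Fin m → ℝ, ∫ t, g (σ (t, y)) := integral_const_mul _ _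


lemma proj_cont (i : Fin (m+1)) : Continuous fun x : EuclideanSpace ℝ (Fin (m+1)) => x i :=
  (EuclideanSpace.proj i).continuous

lemma cubeSl_open : IsOpen (cubeSl m n) := by
  have h1 : IsOpen {x : EuclideanSpace ℝ (Fin (m+1)) | ∀ i, x i ∈ Set.Ioo (0:ℝ) 1} := by
    rw [show {x : EuclideanSpace ℝ (Fin (m+1)) | ∀ i, x i ∈ Set.Ioo (0:ℝ) 1}
        = ⋂ i, (fun x : EuclideanSpace ℝ (Fin (m+1)) => x i) ⁻¹' (Set.Ioo 0 1) by
      ext x; simp]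
    exact isOpen_iInter_of_finite fun i => isOpen_Ioo.preimage (proj_cont m i)
  have h2 : IsOpen {x : EuclideanSpace ℝ (Fin (m+1)) | ∀ k : ℕ, k ≤ n → x 0 ≠ (k:ℝ)/n} := by
    rw [show {x : EuclideanSpace ℝ (Fin (m+1)) | ∀ k : ℕ, k ≤ n → x 0 ≠ (k:ℝ)/n}
        = ⋂ k ∈ Set.Iic n, (fun x : EuclideanSpace ℝ (Fin (m+1)) => x 0) ⁻¹' ({(k:ℝ)/n}ᶜ) by
      ext x; simp]
    exact (Set.finite_Iic n).isOpen_biInter fun k _ =>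
      isOpen_compl_singleton.preimage (proj_cont m 0)
  exact h1.inter h2

lemma cubeSl_nonempty (hn : 0 < n) : (cubeSl m n).Nonempty := by
  have hnR : (0:ℝ) < n := by exact_mod_cast hn
  have h1n : (1:ℝ) ≤ n := by exact_mod_cast hn
  refine ⟨WithLp.toLp 2 (fun i => if i = 0 then 1/(2*n) else 1/2 : Fin (m+1) → ℝ), ?_, ?_⟩
  · intro i
    by_cases h : i = 0 <;> simp only [PiLp.toLp_apply, h, if_true, if_false, reduceIte] <;> constructor
    · positivity
    · rw [div_lt_one (by positivity)]; linarith
    · norm_num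
    · norm_num
  · intro k hk hcon
    simp only [PiLp.toLp_apply, reduceIte] at hcon
    have hne : (n:ℝ) ≠ 0 := hnR.ne'
    rw [div_eq_div_iff (by positivity) hne] at hcon
    have h3 : (1:ℝ) = 2 * k := by
      have := mul_right_cancel₀ hne (by linarith : (1:ℝ) * n = (2 * (k:ℝ)) * n)
      linarith
    have : (1:ℕ) = 2 * k := by exact_mod_cast h3
    omega

lemma cubeSl_bounded : IsBounded (cubeSl m n) := by
  apply (isBounded_closedBall (x := (0 : EuclideanSpace ℝ (Fin (m+1)))) (r := (m+1 : ℝ))).subset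
  intro x hx
  have hodd : ∀ i, ‖x i‖ ^ 2 ≤ 1 := by
    intro i
    have := hx.1 i
    rw [Real.norm_eq_abs, abs_of_pos this.1]
    nlinarith [this.1, this.2]
  have hnorm : ‖x‖ ≤ m + 1 := by
    rw [EuclideanSpace.norm_eq]
    have h1 : ∑ i, ‖x i‖ ^ 2 ≤ (m+1 : ℝ) := by
      calc ∑ i, ‖x i‖ ^ 2 ≤ ∑ _i : Fin (m+1), (1:ℝ) := Finset.sum_le_sum fun i _ => hodd i
        _ = (m+1 : ℝ) := by simp
    calc Real.sqrt (∑ i, ‖x i‖ ^ 2) ≤ Real.sqrt (m+1 : ℝ) := Real.sqrt_le_sqrt h1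
      _ ≤ Real.sqrt ((m+1:ℝ)^2) := Real.sqrt_le_sqrt (by nlinarith [Nat.cast_nonneg (α := ℝ) m])
      _ = m + 1 := Real.sqrt_sq (by positivity)
  simpa [Metric.mem_closedBall, dist_zero_right] using hnorm

lemma volume_cube : volume {x : EuclideanSpace ℝ (Fin (m+1)) | ∀ i, x i ∈ Set.Ioo (0:ℝ) 1} = 1 := by
  have mp := EuclideanSpace.volume_preserving_symm_measurableEquiv_toLp (Fin (m+1))
  have hpre : {x : EuclideanSpace ℝ (Fin (m+1)) | ∀ i, x i ∈ Set.Ioo (0:ℝ) 1}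
      = (MeasurableEquiv.toLp 2 (Fin (m+1) → ℝ)).symm ⁻¹' (Set.pi Set.univ fun _ => Set.Ioo (0:ℝ) 1) := by
    ext x
    simp [MeasurableEquiv.coe_toLp, MeasurableEquiv.coe_toLp_symm, Set.mem_pi]
  rw [hpre, mp.measure_preimage (MeasurableSet.univ_pi fun _ => measurableSet_Ioo).nullMeasurableSet]
  rw [volume_pi_pi]
  simp

lemma volume_hyper (c : ℝ) : volume {x : EuclideanSpace ℝ (Fin (m+1)) | x 0 = c} = 0 := by
  have mp := EuclideanSpace.volume_preserving_symm_measurableEquiv_toLp (Fin (m+1))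
  have hpre : {x : EuclideanSpace ℝ (Fin (m+1)) | x 0 = c}
      = (MeasurableEquiv.toLp 2 (Fin (m+1) → ℝ)).symm ⁻¹'
        (Set.pi Set.univ (Function.update (fun _ : Fin (m+1) => (Set.univ : Set ℝ)) 0 {c})) := by
    ext x
    simp only [Set.mem_preimage, Set.mem_pi, Set.mem_univ, forall_true_left, Set.mem_setOf_eq]
    constructor
    · intro h i
      by_cases hi : i = 0
      · subst hi; simp [Function.update, h, MeasurableEquiv.coe_toLp, MeasurableEquiv.coe_toLp_symm]
      · simp [Function.update, hi]
    · intro h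
      have := h 0
      simpa [Function.update, MeasurableEquiv.coe_toLp, MeasurableEquiv.coe_toLp_symm] using this
  rw [hpre, mp.measure_preimage]
  · rw [volume_pi_pi]
    apply Finset.prod_eq_zero (Finset.mem_univ (0 : Fin (m+1)))
    simp
  · apply MeasurableSet.nullMeasurableSet
    apply MeasurableSet.univ_pi
    intro i
    by_cases hi : i = 0
    · subst hi; simp
    · simp [Function.update, hi]

lemma volume_cubeSl (hn : 0 < n) : volume (cubeSl m n) = 1 := by
  have hdiff : cubeSl m n = {x : EuclideanSpace ℝ (Fin (m+1)) | ∀ i, x i ∈ Set.Ioo (0:ℝ) 1}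
      \ (⋃ k ∈ Set.Iic n, {x : EuclideanSpace ℝ (Fin (m+1)) | x 0 = (k:ℝ)/n}) := by
    ext x
    simp only [cubeSl, Set.mem_setOf_eq, Set.mem_diff, Set.mem_iUnion, Set.mem_Iic]
    constructor
    · rintro ⟨h1, h2⟩
      exact ⟨h1, fun ⟨k, hk, he⟩ => h2 k hk he⟩
    · rintro ⟨h1, h2⟩
      exact ⟨h1, fun k hk he => h2 ⟨k, hk, he⟩⟩
  rw [hdiff, measure_diff_null, volume_cube]
  apply (measure_biUnion_null_iff (Set.finite_Iic n).countable).mpr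
  intro k _
  exact volume_hyper m ((k:ℝ)/n)

lemma torsion_cubeSl_le (m n : ℕ) (hn : 0 < n) :
    torsion (m+1) (cubeSl m n) ≤ (1/(n:ℝ))^2 := by
  apply Real.sSup_le _ (by positivity)
  rintro e ⟨v, hv, hcs, hsub, hI, he⟩
  set Ω := cubeSl m n with hΩ
  set g : EuclideanSpace ℝ (Fin (m+1)) → ℝ := fun x => ‖fderiv ℝ v x‖ with hgdef
  set I : ℝ := ∫ x, g x ^ 2 with hIdef
  have hIpos : 0 < I := hI
  set sI := Real.sqrt I with hsIdef
  have hsI : 0 < sI := Real.sqrt_pos.mpr hIpos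
  have hsI2 : sI ^ 2 = I := Real.sq_sqrt hIpos.le
  have hgcont : Continuous g := (hv.continuous_fderiv (by simp)).norm
  have hgcs : HasCompactSupport g := (hcs.fderiv ℝ).norm
  have hgi : Integrable g := hgcont.integrable_of_hasCompactSupport hgcs
  have hg2i : Integrable (fun x => g x ^ 2) := by
    apply (hgcont.pow 2).integrable_of_hasCompactSupport
    rw [sq]; exact hgcs.mul_left
  have hms : MeasurableSet Ω := (cubeSl_open m n).measurableSet
  have hvol : volume Ω = 1 := volume_cubeSl m n hn
  -- ∫ over Ω equals full integral
  have hIntΩ : ∫ x in Ω, v x = ∫ x, v x := by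
    rw [← integral_indicator hms,
      Set.indicator_eq_self.mpr ((Function.support_subset_iff'.mpr
        (fun x hx => image_eq_zero_of_notMem_tsupport (fun hmem => hx (hsub hmem)))).trans
        (le_refl Ω : Ω ⊆ Ω))]
  -- pointwise AM-GM bound
  have hpt : ∀ x, g x ≤ (g x ^ 2 / sI + Set.indicator Ω (fun _ => sI) x) / 2 := by
    intro x
    by_cases hx : x ∈ Ω
    · rw [Set.indicator_of_mem hx]
      rw [div_add' _ _ _ hsI.ne', le_div_iff₀ (by norm_num : (0:ℝ) < 2), le_div_iff₀ hsI]
      nlinarith [sq_nonneg (g x - sI)]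
    · rw [Set.indicator_of_notMem hx]
      have hg0 : g x = 0 := by
        have hnt : x ∉ tsupport v := fun hmem => hx (hsub hmem)
        have : fderiv ℝ v x = 0 := by
          by_contra hne
          exact hnt (support_fderiv_subset ℝ (Function.mem_support.mpr hne))
        simp [hgdef, this]
      rw [hg0]
      positivity
  have hindi : Integrable (Set.indicator Ω fun _ => sI) := by
    rw [integrable_indicator_iff hms]
    apply (integrableOn_const_iff (by simp)).mpr
    right; rw [hvol]; exact one_lt_top
  -- ∫ g ≤ sI
  have hgle : ∫ x, g x ≤ sI := by
    have h1 : ∫ x, g x ≤ ∫ x, (g x ^ 2 / sI + Set.indicator Ω (fun _ => sI) x) / 2 :=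
      integral_mono hgi (((hg2i.div_const sI).add hindi).div_const 2) hpt
    have h2 : ∫ x, (g x ^ 2 / sI + Set.indicator Ω (fun _ => sI) x) / 2
        = ((∫ x, g x ^ 2) / sI + sI * (volume Ω).toReal) / 2 := by
      rw [integral_div, integral_add (hg2i.div_const sI) hindi, integral_div,
        integral_indicator_const _ hms]
      simp [mul_comm, Measure.real]
    rw [h2, ← hIdef, hvol] at h1
    simp only [ENNReal.toReal_one, mul_one] at h1
    have h3 : I / sI = sI := by
      rw [← hsI2]; rw [sq]; field_simp
    rw [h3] at h1
    linarith
  -- key bound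
  have hkey : ∫ x, |v x| ≤ (1/(n:ℝ)) * ∫ x, g x := key_bound m n hn v hv hcs hsub
  have habs : |∫ x, v x| ≤ ∫ x, |v x| := by
    have := norm_integral_le_integral_norm (μ := volume) v
    simpa [Real.norm_eq_abs] using this
  have hfinal : |∫ x in Ω, v x| ≤ (1/(n:ℝ)) * sI := by
    rw [hIntΩ]
    calc |∫ x, v x| ≤ ∫ x, |v x| := habs
      _ ≤ (1/(n:ℝ)) * ∫ x, g x := hkey
      _ ≤ (1/(n:ℝ)) * sI := by
          apply mul_le_mul_of_nonneg_left hgle (by positivity)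
  rw [he]
  have hnum : (∫ x in Ω, v x) ^ 2 ≤ (1/(n:ℝ))^2 * I := by
    have h4 : (∫ x in Ω, v x) ^ 2 = |∫ x in Ω, v x| ^ 2 := (sq_abs _).symm
    rw [h4, ← hsI2]
    calc |∫ x in Ω, v x| ^ 2 ≤ ((1/(n:ℝ)) * sI) ^ 2 := by
          apply pow_le_pow_left₀ (abs_nonneg _) hfinal
      _ = (1/(n:ℝ))^2 * sI ^ 2 := by ring
  calc (∫ x in Ω, v x) ^ 2 / I ≤ ((1/(n:ℝ))^2 * I) / I :=
        (div_le_div_iff_of_pos_right hIpos).mpr hnum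
    _ = (1/(n:ℝ))^2 := by field_simp

lemma cubeSl_subset (m n : ℕ) :
    cubeSl m n ⊆ Metric.closedBall (0 : EuclideanSpace ℝ (Fin (m+1))) (m+1 : ℝ) := by
  intro x hx
  have hodd : ∀ i, ‖x i‖ ^ 2 ≤ 1 := by
    intro i
    have := hx.1 i
    rw [Real.norm_eq_abs, abs_of_pos this.1]
    nlinarith [this.1, this.2]
  have hnorm : ‖x‖ ≤ m + 1 := by
    rw [EuclideanSpace.norm_eq]
    have h1 : ∑ i, ‖x i‖ ^ 2 ≤ (m+1 : ℝ) := by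
      calc ∑ i, ‖x i‖ ^ 2 ≤ ∑ _i : Fin (m+1), (1:ℝ) := Finset.sum_le_sum fun i _ => hodd i
        _ = (m+1 : ℝ) := by simp
    calc Real.sqrt (∑ i, ‖x i‖ ^ 2) ≤ Real.sqrt (m+1 : ℝ) := Real.sqrt_le_sqrt h1
      _ ≤ Real.sqrt ((m+1:ℝ)^2) := Real.sqrt_le_sqrt (by nlinarith [Nat.cast_nonneg (α := ℝ) m])
      _ = m + 1 := Real.sqrt_sq (by positivity)
  simpa [Metric.mem_closedBall, dist_zero_right] using hnorm

lemma newtCap_nonneg (d : ℕ) (K : Set (EuclideanSpace ℝ (Fin d))) : 0 ≤ newtCap d K := by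
  apply Real.sInf_nonneg
  rintro e ⟨φ, -, -, -, he⟩
  exact he ▸ integral_nonneg fun x => by positivity

lemma torsion_nonneg (d : ℕ) (Ω : Set (EuclideanSpace ℝ (Fin d))) : 0 ≤ torsion d Ω := by
  apply Real.sSup_nonneg
  rintro e ⟨v, -, -, -, hI, he⟩
  exact he ▸ div_nonneg (sq_nonneg _) hI.le

lemma newtCap_cubeSl_le (m : ℕ) :
    ∃ C : ℝ, 0 ≤ C ∧ ∀ k : ℕ, newtCap (m+1) (closure (cubeSl m k)) ≤ C := by
  have hb12 : (m+2 : ℝ) < m+3 := by linarith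
  set b : ContDiffBump (0 : EuclideanSpace ℝ (Fin (m+1))) :=
    ⟨m+2, m+3, by positivity, hb12⟩ with hbdef
  refine ⟨∫ x, ‖fderiv ℝ b x‖^2, integral_nonneg (fun x => by positivity), ?_⟩
  intro k
  apply csInf_le
  · refine ⟨0, ?_⟩
    rintro e ⟨φ, -, -, -, he⟩
    exact he ▸ integral_nonneg fun x => by positivity
  · refine ⟨b, b.contDiff, b.hasCompactSupport,
      ⟨Metric.ball 0 (m+2 : ℝ), Metric.isOpen_ball, ?_, ?_⟩, rfl⟩
    · calc closure (cubeSl m k)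
          ⊆ Metric.closedBall (0 : EuclideanSpace ℝ (Fin (m+1))) (m+1 : ℝ) :=
            closure_minimal (cubeSl_subset m k) Metric.isClosed_closedBall
        _ ⊆ Metric.ball 0 (m+2 : ℝ) := Metric.closedBall_subset_ball (by linarith)
    · intro x hx
      have : b x = 1 := b.one_of_mem_closedBall (Metric.ball_subset_closedBall hx)
      rw [this]


/-- Theorem 1(iii): for `d ≥ 3` and `q > 0`, the infimum of `G_q` over non-empty open
bounded subsets of `ℝ^d` equals `0`. -/
theorem inf_Gq_open_bounded_eq_zero (d : ℕ) (hd : 3 ≤ d) (q : ℝ) (hq : 0 < q) :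
    sInf {x : ℝ | ∃ Ω : Set (EuclideanSpace ℝ (Fin d)),
      Ω.Nonempty ∧ IsOpen Ω ∧ IsBounded Ω ∧ x = Gfun d q Ω} = 0 := by
  obtain ⟨m, rfl⟩ : ∃ m, d = m + 1 := ⟨d - 1, by omega⟩
  set S : Set ℝ := {x | ∃ Ω : Set (EuclideanSpace ℝ (Fin (m+1))),
    Ω.Nonempty ∧ IsOpen Ω ∧ IsBounded Ω ∧ x = Gfun (m+1) q Ω} with hS
  have hGnonneg : ∀ x ∈ S, 0 ≤ x := by
    rintro x ⟨Ω, -, -, -, rfl⟩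
    have h1 := newtCap_nonneg (m+1) (closure Ω)
    have h2 := torsion_nonneg (m+1) Ω
    exact div_nonneg (mul_nonneg h1 (Real.rpow_nonneg h2 q))
      (Real.rpow_nonneg ENNReal.toReal_nonneg _)
  obtain ⟨C, hC0, hC⟩ := newtCap_cubeSl_le m
  have hmem : ∀ k : ℕ, Gfun (m+1) q (cubeSl m (k+1)) ∈ S := fun k =>
    ⟨cubeSl m (k+1), cubeSl_nonempty m (k+1) k.succ_pos, cubeSl_open m (k+1),
      cubeSl_bounded m (k+1), rfl⟩
  have hbdd : BddBelow S := ⟨0, fun x hx => hGnonneg x hx⟩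
  have hGle : ∀ k : ℕ, Gfun (m+1) q (cubeSl m (k+1)) ≤ C * ((1/((k:ℝ)+1))^2) ^ q := by
    intro k
    unfold Gfun
    rw [volume_cubeSl m (k+1) k.succ_pos]
    simp only [ENNReal.toReal_one, Real.one_rpow, div_one]
    have hT := torsion_cubeSl_le m (k+1) k.succ_pos
    have hT0 := torsion_nonneg (m+1) (cubeSl m (k+1))
    have hcap := hC (k+1)
    have hcast : (1/(((k+1):ℕ):ℝ))^2 = (1/((k:ℝ)+1))^2 := by push_cast; ring
    apply mul_le_mul hcap ?_ (Real.rpow_nonneg hT0 q) hC0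
    apply Real.rpow_le_rpow hT0 ?_ hq.le
    rw [← hcast]
    exact hT
  have htend : Filter.Tendsto (fun k : ℕ => C * ((1/((k:ℝ)+1))^2) ^ q)
      Filter.atTop (nhds 0) := by
    have h1 : Filter.Tendsto (fun k : ℕ => (1/((k:ℝ)+1))^2) Filter.atTop (nhds 0) := by
      have h0 := tendsto_one_div_add_atTop_nhds_zero_nat (𝕜 := ℝ)
      have h0' := h0.pow 2
      simpa using h0'
    have h2 : Filter.Tendsto (fun x : ℝ => C * x ^ q) (nhds 0) (nhds 0) := by
      have hc : ContinuousAt (fun x : ℝ => x ^ q) 0 :=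
        Real.continuousAt_rpow_const 0 q (Or.inr hq.le)
      have h3 := hc.tendsto
      rw [Real.zero_rpow hq.ne'] at h3
      have h4 := h3.const_mul C
      simpa using h4
    exact h2.comp h1
  have hle : ∀ k : ℕ, sInf S ≤ C * ((1/((k:ℝ)+1))^2) ^ q := fun k =>
    (csInf_le hbdd (hmem k)).trans (hGle k)
  have h1 : sInf S ≤ 0 := ge_of_tendsto htend (Filter.Eventually.of_forall hle)
  have h2 : 0 ≤ sInf S := le_csInf ⟨_, hmem 0⟩ (fun b hb => hGnonneg b hb)
  linarith
end

section
/- Let d ≥ 3 and let a_1 ≥ a_2 ≥ … ≥ a_d > 0 be real numbers. Then ∫_0^∞ (∏_{i=1}^d (a_i² + t))^{−1/2} dt ≤ 4 · (∏_{i=1}^{d−2} a_i)^{−1} · log(e·a_{d−2}/a_{d−1}), where for d = 3 the product ∏_{i=1}^{d−2} a_i is interpreted as a_1. -/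
set_option maxHeartbeats 1000000


open MeasureTheory Set

private lemma rpow_aux_mono {c u : ℝ} (hc : 0 < c) (hcu : c ≤ u) :
    u ^ (-(1 : ℝ) / 2) ≤ c ^ (-(1 : ℝ) / 2) :=
  Real.rpow_le_rpow_of_nonpos hc hcu (by norm_num)

private lemma sq_rpow_aux {c : ℝ} (hc : 0 < c) : (c ^ 2) ^ (-(1 : ℝ) / 2) = c⁻¹ := by
  rw [← Real.rpow_natCast c 2, ← Real.rpow_mul hc.le]
  norm_num [Real.rpow_neg_one]

private lemma sqrt_rpow_aux {c : ℝ} (hc : 0 < c) : (c ^ 2) ^ ((1 : ℝ) / 2) = c := by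
  rw [← Real.rpow_natCast c 2, ← Real.rpow_mul hc.le]
  norm_num

/-- Equation (e64): for `d ≥ 3` and `a_1 ≥ a_2 ≥ … ≥ a_d > 0`, the elliptic integral
`𝔢(a) = ∫_0^∞ (∏_i (a_i² + t))^{-1/2} dt` satisfies
`𝔢(a) ≤ 4 (∏_{i=1}^{d-2} a_i)^{-1} log (e a_{d-2}/a_{d-1})`.
Here `a_i` is `a ⟨i-1,_⟩` (the indexing is zero-based), so the product is over the indices
`i : Fin d` with `(i : ℕ) < d - 2`, `a_{d-2}` is `a ⟨d-3,_⟩`, and `a_{d-1}` is `a ⟨d-2,_⟩`. -/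
theorem elliptic_integral_upper_bound (d : ℕ) (hd : 3 ≤ d) (a : Fin d → ℝ)
    (hpos : ∀ i, 0 < a i) (hmono : ∀ i j : Fin d, i ≤ j → a j ≤ a i) :
    (∫ t in Ioi (0 : ℝ), (∏ i, (a i ^ 2 + t)) ^ (-(1 : ℝ) / 2)) ≤
      4 * (∏ i ∈ Finset.univ.filter (fun i : Fin d => (i : ℕ) < d - 2), a i)⁻¹ *
        Real.log (Real.exp 1 * a ⟨d - 3, by omega⟩ / a ⟨d - 2, by omega⟩) := by
  set α := a ⟨d - 3, by omega⟩ with hα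
  set β := a ⟨d - 2, by omega⟩ with hβ
  set S := Finset.univ.filter (fun i : Fin d => (i : ℕ) < d - 2) with hSdef
  set P := ∏ i ∈ S, a i with hPdef
  have hαpos : 0 < α := hpos _
  have hβpos : 0 < β := hpos _
  have hβα : β ≤ α := hmono _ _ (by simp [Fin.le_def]; omega)
  have hPpos : 0 < P := Finset.prod_pos fun i _ => hpos i
  have hlog : Real.log (Real.exp 1 * α / β) = 1 + Real.log (α / β) := by
    rw [mul_div_assoc, Real.log_mul (Real.exp_ne_zero 1) (by positivity), Real.log_exp]
  have hlognn : 0 ≤ Real.log (α / β) :=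
    Real.log_nonneg (by rw [le_div_iff₀ hβpos]; linarith)
  have hRHSnn : 0 ≤ 4 * P⁻¹ * Real.log (Real.exp 1 * α / β) := by
    rw [hlog]
    have h5 : 0 < P⁻¹ := inv_pos.mpr hPpos
    nlinarith
  by_cases hint :
      IntegrableOn (fun t : ℝ => (∏ i, (a i ^ 2 + t)) ^ (-(1 : ℝ) / 2)) (Ioi (0 : ℝ)) volume
  swap
  · rw [MeasureTheory.integral_undef hint]; exact hRHSnn
  -- index d-3 is in S
  have hj3S : (⟨d - 3, by omega⟩ : Fin d) ∈ S := by
    simp only [hSdef, Finset.mem_filter, Finset.mem_univ, true_and]; omega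
  set Q := ∏ i ∈ S.erase ⟨d - 3, by omega⟩, a i with hQdef
  have hQpos : 0 < Q := Finset.prod_pos fun i _ => hpos i
  have hQP : α * Q = P := Finset.mul_prod_erase S a hj3S
  -- decomposition of the full product
  have hsplit : ∀ t : ℝ, (∏ i, (a i ^ 2 + t)) =
      (∏ i ∈ S, (a i ^ 2 + t)) * ((β ^ 2 + t) * (a ⟨d - 1, by omega⟩ ^ 2 + t)) := by
    intro t
    rw [← Finset.prod_filter_mul_prod_filter_not Finset.univ
      (fun i : Fin d => (i : ℕ) < d - 2) (fun i => a i ^ 2 + t)]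
    congr 1
    have h2 : Finset.univ.filter (fun i : Fin d => ¬ (i : ℕ) < d - 2) =
        {(⟨d - 2, by omega⟩ : Fin d), ⟨d - 1, by omega⟩} := by
      ext i
      have hi := i.isLt
      simp only [Finset.mem_filter, Finset.mem_univ, true_and, Finset.mem_insert,
        Finset.mem_singleton, Fin.ext_iff]
      omega
    rw [h2, Finset.prod_pair (by simp only [ne_eq, Fin.mk.injEq]; omega)]
  have hSbound : ∀ t : ℝ, 0 ≤ t → P ^ 2 ≤ ∏ i ∈ S, (a i ^ 2 + t) := by
    intro t ht
    rw [hPdef, ← Finset.prod_pow]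
    exact Finset.prod_le_prod (fun i _ => sq_nonneg _) fun i _ => by linarith
  have hlastpos : 0 < a ⟨d - 1, by omega⟩ := hpos _
  -- positivity of the product
  have hprodpos : ∀ t : ℝ, 0 < t → 0 < ∏ i, (a i ^ 2 + t) := by
    intro t ht
    exact Finset.prod_pos fun i _ => by nlinarith [sq_nonneg (a i)]
  have hβα2 : β ^ 2 ≤ α ^ 2 := by nlinarith
  -- pointwise bound on (0, β²]
  have hb1 : ∀ t ∈ Ioc (0 : ℝ) (β ^ 2), (∏ i, (a i ^ 2 + t)) ^ (-(1 : ℝ) / 2) ≤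
      (P * β)⁻¹ * t ^ (-(1 : ℝ) / 2) := by
    intro t ht
    obtain ⟨ht0, -⟩ := ht
    have h1 : P ^ 2 * (β ^ 2 * t) ≤ ∏ i, (a i ^ 2 + t) := by
      rw [hsplit t]
      have h2 := hSbound t ht0.le
      have h3 : β ^ 2 * t ≤ (β ^ 2 + t) * (a ⟨d - 1, by omega⟩ ^ 2 + t) := by
        nlinarith [sq_nonneg (a ⟨d - 1, by omega⟩)]
      exact mul_le_mul h2 h3 (by positivity) (le_trans (by positivity) h2)
    calc (∏ i, (a i ^ 2 + t)) ^ (-(1 : ℝ) / 2)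
        ≤ (P ^ 2 * (β ^ 2 * t)) ^ (-(1 : ℝ) / 2) := rpow_aux_mono (by positivity) h1
      _ = (P * β)⁻¹ * t ^ (-(1 : ℝ) / 2) := by
          rw [Real.mul_rpow (by positivity) (by positivity),
            Real.mul_rpow (by positivity) ht0.le, sq_rpow_aux hPpos, sq_rpow_aux hβpos,
            mul_inv]
          ring
  -- pointwise bound on (β², α²]
  have hb2 : ∀ t ∈ Ioc (β ^ 2) (α ^ 2), (∏ i, (a i ^ 2 + t)) ^ (-(1 : ℝ) / 2) ≤
      P⁻¹ * t⁻¹ := by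
    intro t ht
    have ht0 : 0 < t := lt_trans (by positivity) ht.1
    have h1 : P ^ 2 * t ^ 2 ≤ ∏ i, (a i ^ 2 + t) := by
      rw [hsplit t]
      have h2 := hSbound t ht0.le
      have h3 : t ^ 2 ≤ (β ^ 2 + t) * (a ⟨d - 1, by omega⟩ ^ 2 + t) := by
        nlinarith [sq_nonneg β, sq_nonneg (a ⟨d - 1, by omega⟩)]
      exact mul_le_mul h2 h3 (by positivity) (le_trans (by positivity) h2)
    calc (∏ i, (a i ^ 2 + t)) ^ (-(1 : ℝ) / 2)
        ≤ (P ^ 2 * t ^ 2) ^ (-(1 : ℝ) / 2) := rpow_aux_mono (by positivity) h1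
      _ = P⁻¹ * t⁻¹ := by
          rw [Real.mul_rpow (by positivity) (by positivity), sq_rpow_aux hPpos,
            sq_rpow_aux ht0]
  -- pointwise bound on (α², ∞)
  have hb3 : ∀ t ∈ Ioi (α ^ 2), (∏ i, (a i ^ 2 + t)) ^ (-(1 : ℝ) / 2) ≤
      Q⁻¹ * t ^ (-(3 : ℝ) / 2) := by
    intro t ht
    have ht' : α ^ 2 ≤ t := le_of_lt ht
    have ht0 : 0 < t := lt_of_lt_of_le (by positivity) ht'
    have hQ2 : Q ^ 2 ≤ ∏ i ∈ S.erase ⟨d - 3, by omega⟩, (a i ^ 2 + t) := by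
      rw [hQdef, ← Finset.prod_pow]
      exact Finset.prod_le_prod (fun i _ => sq_nonneg _) fun i _ => by linarith
    have hSge : t * Q ^ 2 ≤ ∏ i ∈ S, (a i ^ 2 + t) := by
      rw [← Finset.mul_prod_erase S _ hj3S]
      have h4 : t ≤ α ^ 2 + t := by nlinarith [sq_nonneg α]
      exact mul_le_mul h4 hQ2 (by positivity) (by positivity)
    have h1 : Q ^ 2 * t ^ 3 ≤ ∏ i, (a i ^ 2 + t) := by
      rw [hsplit t]
      have h3 : t * t ≤ (β ^ 2 + t) * (a ⟨d - 1, by omega⟩ ^ 2 + t) := by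
        nlinarith [sq_nonneg β, sq_nonneg (a ⟨d - 1, by omega⟩)]
      calc Q ^ 2 * t ^ 3 = (t * Q ^ 2) * (t * t) := by ring
        _ ≤ _ := mul_le_mul hSge h3 (by positivity) (le_trans (by positivity) hSge)
    have hpow3 : ((t ^ 3 : ℝ)) ^ (-(1 : ℝ) / 2) = t ^ (-(3 : ℝ) / 2) := by
      rw [← Real.rpow_natCast t 3, ← Real.rpow_mul ht0.le]
      norm_num
    calc (∏ i, (a i ^ 2 + t)) ^ (-(1 : ℝ) / 2)
        ≤ (Q ^ 2 * t ^ 3) ^ (-(1 : ℝ) / 2) := rpow_aux_mono (by positivity) h1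
      _ = Q⁻¹ * t ^ (-(3 : ℝ) / 2) := by
          rw [Real.mul_rpow (by positivity) (by positivity), sq_rpow_aux hQpos, hpow3]
  -- integrability of the comparison functions
  have hig1 : IntegrableOn (fun t : ℝ => (P * β)⁻¹ * t ^ (-(1 : ℝ) / 2))
      (Ioc (0 : ℝ) (β ^ 2)) volume := by
    have := (intervalIntegral.intervalIntegrable_rpow' (a := 0) (b := β ^ 2)
      (r := -(1 : ℝ) / 2) (by norm_num)).1
    exact this.const_mul _
  have hig2 : IntegrableOn (fun t : ℝ => P⁻¹ * t⁻¹) (Ioc (β ^ 2) (α ^ 2)) volume := by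
    have hcont : ContinuousOn (fun t : ℝ => P⁻¹ * t⁻¹) (Icc (β ^ 2) (α ^ 2)) := by
      apply ContinuousOn.mul continuousOn_const
      exact ContinuousOn.inv₀ continuousOn_id fun x hx => by nlinarith [hx.1]
    exact (hcont.integrableOn_Icc).mono_set Ioc_subset_Icc_self
  have hig3 : IntegrableOn (fun t : ℝ => Q⁻¹ * t ^ (-(3 : ℝ) / 2)) (Ioi (α ^ 2)) volume := by
    have := integrableOn_Ioi_rpow_of_lt (a := -(3 : ℝ) / 2) (by norm_num)
      (c := α ^ 2) (by positivity)
    exact this.const_mul _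
  -- splitting the domain
  have hu1 : Ioc (0 : ℝ) (β ^ 2) ∪ Ioi (β ^ 2) = Ioi (0 : ℝ) :=
    Ioc_union_Ioi_eq_Ioi (by positivity)
  have hu2 : Ioc (β ^ 2) (α ^ 2) ∪ Ioi (α ^ 2) = Ioi (β ^ 2) :=
    Ioc_union_Ioi_eq_Ioi hβα2
  set f : ℝ → ℝ := fun t => (∏ i, (a i ^ 2 + t)) ^ (-(1 : ℝ) / 2) with hfdef
  have hint1 : IntegrableOn f (Ioc (0 : ℝ) (β ^ 2)) volume :=
    hint.mono_set (by rw [← hu1]; exact subset_union_left)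
  have hintIoiβ : IntegrableOn f (Ioi (β ^ 2)) volume :=
    hint.mono_set (by rw [← hu1]; exact subset_union_right)
  have hint2 : IntegrableOn f (Ioc (β ^ 2) (α ^ 2)) volume :=
    hintIoiβ.mono_set (by rw [← hu2]; exact subset_union_left)
  have hint3 : IntegrableOn f (Ioi (α ^ 2)) volume :=
    hintIoiβ.mono_set (by rw [← hu2]; exact subset_union_right)
  have hsum1 : ∫ t in Ioi (0 : ℝ), f t =
      (∫ t in Ioc (0 : ℝ) (β ^ 2), f t) + ∫ t in Ioi (β ^ 2), f t := by
    rw [← hu1, setIntegral_union (Ioc_disjoint_Ioi le_rfl) measurableSet_Ioi hint1 hintIoiβ]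
  have hsum2 : ∫ t in Ioi (β ^ 2), f t =
      (∫ t in Ioc (β ^ 2) (α ^ 2), f t) + ∫ t in Ioi (α ^ 2), f t := by
    rw [← hu2, setIntegral_union (Ioc_disjoint_Ioi le_rfl) measurableSet_Ioi hint2 hint3]
  -- bound each piece
  have hp1 : (∫ t in Ioc (0 : ℝ) (β ^ 2), f t) ≤ 2 * P⁻¹ := by
    have h1 : (∫ t in Ioc (0 : ℝ) (β ^ 2), f t) ≤
        ∫ t in Ioc (0 : ℝ) (β ^ 2), (P * β)⁻¹ * t ^ (-(1 : ℝ) / 2) :=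
      setIntegral_mono_on hint1 hig1 measurableSet_Ioc hb1
    have h2 : (∫ t in Ioc (0 : ℝ) (β ^ 2), (P * β)⁻¹ * t ^ (-(1 : ℝ) / 2)) = 2 * P⁻¹ := by
      rw [MeasureTheory.integral_const_mul, ← intervalIntegral.integral_of_le (by positivity),
        integral_rpow (Or.inl (by norm_num))]
      have : (β ^ 2 : ℝ) ^ (-(1 : ℝ) / 2 + 1) = β := by
        rw [show (-(1 : ℝ) / 2 + 1) = (1 : ℝ) / 2 by norm_num]; exact sqrt_rpow_aux hβpos
      rw [this, Real.zero_rpow (by norm_num)]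
      field_simp
      ring
    linarith
  have hp2 : (∫ t in Ioc (β ^ 2) (α ^ 2), f t) ≤ P⁻¹ * (2 * Real.log (α / β)) := by
    have h1 : (∫ t in Ioc (β ^ 2) (α ^ 2), f t) ≤
        ∫ t in Ioc (β ^ 2) (α ^ 2), P⁻¹ * t⁻¹ :=
      setIntegral_mono_on hint2 hig2 measurableSet_Ioc hb2
    have h2 : (∫ t in Ioc (β ^ 2) (α ^ 2), P⁻¹ * t⁻¹) = P⁻¹ * (2 * Real.log (α / β)) := by
      rw [MeasureTheory.integral_const_mul, ← intervalIntegral.integral_of_le hβα2,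
        integral_inv_of_pos (by positivity) (by positivity)]
      congr 1
      rw [show α ^ 2 / β ^ 2 = (α / β) ^ 2 by ring, Real.log_pow]
      push_cast; ring
    linarith
  have hp3 : (∫ t in Ioi (α ^ 2), f t) ≤ 2 * P⁻¹ := by
    have h1 : (∫ t in Ioi (α ^ 2), f t) ≤ ∫ t in Ioi (α ^ 2), Q⁻¹ * t ^ (-(3 : ℝ) / 2) :=
      setIntegral_mono_on hint3 hig3 measurableSet_Ioi hb3
    have h2 : (∫ t in Ioi (α ^ 2), Q⁻¹ * t ^ (-(3 : ℝ) / 2)) = 2 * P⁻¹ := by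
      rw [MeasureTheory.integral_const_mul,
        integral_Ioi_rpow_of_lt (by norm_num) (by positivity)]
      have h3 : (α ^ 2 : ℝ) ^ (-(3 : ℝ) / 2 + 1) = α⁻¹ := by
        rw [show (-(3 : ℝ) / 2 + 1) = -(1 : ℝ) / 2 by norm_num]; exact sq_rpow_aux hαpos
      rw [h3]
      rw [← hQP, mul_inv]
      field_simp
      ring
    linarith
  -- conclude
  rw [hsum1, hsum2, hlog]
  have hPinv : 0 < P⁻¹ := by positivity
  nlinarith [hp1, hp2, hp3, mul_nonneg hPinv.le hlognn]
end
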